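/- arXiv:2511.17051 — 2 statements merged into one kernel-verified Lean document; each statement's English description precedes it below -/
import Mathlib

section
/- Every matrix X in S^n_+ ∩ V can be written as a sum of at most r matrices each of which lies on an extreme ray of S^n_+ ∩ V; more precisely, every matrix in the relative interior of a face F_{T,B} (T ∈ 𝕋_++, B ⊆ {1,…,r} nonempty) is a sum of at most |B| matrices each lying on an extreme ray of S^n_+ ∩ V. In particular the Carathéodory number of S^n_+ ∩ V is at most r. -/
noncomputable section
open scoped Classical
open Matrix

/-- A face of a convex cone `C`: a nonempty convex subset `F ⊆ C` such that whenever the open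
segment between two points of `C` meets `F`, both endpoints lie in `F`. -/
def IsFaceOf {E : Type*} [AddCommGroup E] [Module ℝ E] (F C : Set E) : Prop :=
  F.Nonempty ∧ F ⊆ C ∧ Convex ℝ F ∧
    ∀ x ∈ C, ∀ y ∈ C, (∃ t : ℝ, 0 < t ∧ t < 1 ∧ t • x + (1 - t) • y ∈ F) → x ∈ F ∧ y ∈ F

/-- An extreme ray of `C`: a face whose linear span is one-dimensional. -/
def IsExtremeRayOf {E : Type*} [AddCommGroup E] [Module ℝ E] (R C : Set E) : Prop :=
  IsFaceOf R C ∧ Module.finrank ℝ (Submodule.span ℝ R) = 1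

/-- `x` is a sum of at most `m` points, each lying on an extreme ray of `C`. -/
def SumExtreme {E : Type*} [AddCommGroup E] [Module ℝ E] (C : Set E) (m : ℕ) (x : E) : Prop :=
  ∃ (k : ℕ) (f : Fin k → E), k ≤ m ∧ (∀ i, ∃ R, IsExtremeRayOf R C ∧ f i ∈ R) ∧ x = ∑ i, f i

/-- The Carathéodory number of the cone `C`. -/
def caraNumber {E : Type*} [AddCommGroup E] [Module ℝ E] (C : Set E) : ℕ :=
  sInf {m | ∀ x ∈ C, SumExtreme C m x}

/-- The ray generated by a point. -/
def ray {E : Type*} [AddCommGroup E] [Module ℝ E] (A : E) : Set E :=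
  {X | ∃ c : ℝ, 0 ≤ c ∧ X = c • A}

/-- The trace (Frobenius) inner product on spaces of rectangular real matrices. -/
def trInner {a b : Type*} [Fintype a] [Fintype b] (X Y : Matrix a b ℝ) : ℝ :=
  Matrix.trace (Xᵀ * Y)

/-- `y` is the orthogonal projection of `x` onto the subspace `W` (with respect to the
trace inner product). -/
def IsProjOn {a b : Type*} [Fintype a] [Fintype b] (W : Set (Matrix a b ℝ))
    (x y : Matrix a b ℝ) : Prop :=
  y ∈ W ∧ ∀ w ∈ W, trInner (x - y) w = 0

/-- The image of the set `S` under orthogonal projection onto the subspace `W`. -/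
def projSet {a b : Type*} [Fintype a] [Fintype b] (W S : Set (Matrix a b ℝ)) :
    Set (Matrix a b ℝ) :=
  {y | ∃ x ∈ S, IsProjOn W x y}

/-- The cone of positive semidefinite matrices. -/
def PSD (ι : Type*) [Fintype ι] : Set (Matrix ι ι ℝ) := {X | X.PosSemidef}

variable {r : ℕ}

/-- Index type for an `n₁ + ⋯ + n_r` block partition. -/
abbrev BIx (n : Fin r → ℕ) : Type := Σ i : Fin r, Fin (n i)

/-- The `(i,j)` block of a block matrix. -/
def blk {n : Fin r → ℕ} (X : Matrix (BIx n) (BIx n) ℝ) (i j : Fin r) :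
    Matrix (Fin (n i)) (Fin (n j)) ℝ :=
  Matrix.of fun a b => X ⟨i, a⟩ ⟨j, b⟩

/-- The space `V` of symmetric block matrices whose blocks lie in the subspaces `Vb i j`
(for `i ≤ j`; the diagonal subspaces `Vb i i` are required elsewhere to be `ℝ·I`). -/
def Vset (n : Fin r → ℕ)
    (Vb : ∀ i j : Fin r, Submodule ℝ (Matrix (Fin (n i)) (Fin (n j)) ℝ)) :
    Set (Matrix (BIx n) (BIx n) ℝ) :=
  {X | X.IsSymm ∧ ∀ i j : Fin r, i ≤ j → blk X i j ∈ Vb i j}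

/-- The set `𝕋` of upper block-triangular matrices with diagonal blocks in `ℝ·I` and
off-diagonal blocks in the `Vb i j`. -/
def TT (n : Fin r → ℕ)
    (Vb : ∀ i j : Fin r, Submodule ℝ (Matrix (Fin (n i)) (Fin (n j)) ℝ)) :
    Set (Matrix (BIx n) (BIx n) ℝ) :=
  {T | (∀ i j : Fin r, j < i → blk T i j = 0) ∧
    (∀ i : Fin r, ∃ c : ℝ, blk T i i = c • (1 : Matrix (Fin (n i)) (Fin (n i)) ℝ)) ∧
    (∀ i j : Fin r, i < j → blk T i j ∈ Vb i j)}

/-- The set `𝕋₊₊ ⊆ 𝕋` of matrices with positive diagonal entries. -/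
def TTpp (n : Fin r → ℕ)
    (Vb : ∀ i j : Fin r, Submodule ℝ (Matrix (Fin (n i)) (Fin (n j)) ℝ)) :
    Set (Matrix (BIx n) (BIx n) ℝ) :=
  {T | (∀ i j : Fin r, j < i → blk T i j = 0) ∧
    (∀ i : Fin r, ∃ c : ℝ, 0 < c ∧ blk T i i = c • (1 : Matrix (Fin (n i)) (Fin (n i)) ℝ)) ∧
    (∀ i j : Fin r, i < j → blk T i j ∈ Vb i j)}

/-- The Ishi spectrahedral cone `K = S^n_{++} ∩ V`. -/
def Kcone (n : Fin r → ℕ)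
    (Vb : ∀ i j : Fin r, Submodule ℝ (Matrix (Fin (n i)) (Fin (n j)) ℝ)) :
    Set (Matrix (BIx n) (BIx n) ℝ) :=
  {X | X.PosDef ∧ X ∈ Vset n Vb}

/-- The closure `S^n_+ ∩ V` of the Ishi spectrahedral cone. -/
def KclSet (n : Fin r → ℕ)
    (Vb : ∀ i j : Fin r, Submodule ℝ (Matrix (Fin (n i)) (Fin (n j)) ℝ)) :
    Set (Matrix (BIx n) (BIx n) ℝ) :=
  {X | X.PosSemidef ∧ X ∈ Vset n Vb}

/-- The dual cone `D = proj_V (S^n_+)` of `K` in `V`. -/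
def dualD (n : Fin r → ℕ)
    (Vb : ∀ i j : Fin r, Submodule ℝ (Matrix (Fin (n i)) (Fin (n j)) ℝ)) :
    Set (Matrix (BIx n) (BIx n) ℝ) :=
  projSet (Vset n Vb) (PSD (BIx n))

/-- The subspace `V^B` of matrices of `V` supported on blocks indexed by `B × B`. -/
def VBset (n : Fin r → ℕ)
    (Vb : ∀ i j : Fin r, Submodule ℝ (Matrix (Fin (n i)) (Fin (n j)) ℝ))
    (B : Finset (Fin r)) : Set (Matrix (BIx n) (BIx n) ℝ) :=
  {X | X ∈ Vset n Vb ∧ ∀ i j : Fin r, i ≤ j → (i ∉ B ∨ j ∉ B) → blk X i j = 0}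

/-- The matrix `I^B` whose diagonal blocks indexed by `B` are identity blocks and whose
other blocks vanish. -/
def IB (n : Fin r → ℕ) (B : Finset (Fin r)) : Matrix (BIx n) (BIx n) ℝ :=
  Matrix.of fun a b => if a = b ∧ a.1 ∈ B then 1 else 0

/-- The face `F_{T,B} = Tᵀ·(S^n_+ ∩ V^B)·T` of the closure `S^n_+ ∩ V`. -/
def FTB (n : Fin r → ℕ)
    (Vb : ∀ i j : Fin r, Submodule ℝ (Matrix (Fin (n i)) (Fin (n j)) ℝ))
    (T : Matrix (BIx n) (BIx n) ℝ) (B : Finset (Fin r)) :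
    Set (Matrix (BIx n) (BIx n) ℝ) :=
  {Y | ∃ X, Matrix.PosSemidef X ∧ X ∈ VBset n Vb B ∧ Y = Tᵀ * X * T}

/-- The face `F^*_{T,N} = proj_V (T · proj_{V^N}(S^n_+) · Tᵀ)` of the dual cone. -/
def FstarTN (n : Fin r → ℕ)
    (Vb : ∀ i j : Fin r, Submodule ℝ (Matrix (Fin (n i)) (Fin (n j)) ℝ))
    (T : Matrix (BIx n) (BIx n) ℝ) (N : Finset (Fin r)) :
    Set (Matrix (BIx n) (BIx n) ℝ) :=
  {Z | ∃ Y ∈ projSet (VBset n Vb N) (PSD (BIx n)), IsProjOn (Vset n Vb) (T * Y * Tᵀ) Z}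


/-!
A positive semidefinite `X ∈ V^B` has a block Cholesky factorisation inside the Ishi algebra.
Its first block row `i ∈ B` has a scalar pivot block `X_ii = c·I`; if `c = 0` the row vanishes,
otherwise `R = c^{-1/2} I^{i} X` is a row of a matrix of `𝕋₊₊` and the Schur complement
`X - RᵀR` is again positive semidefinite and lies in `V^{B ∖ {i}}` by [V2] and [V3]. Hence
`X = ∑_{i ∈ B} R_iᵀ R_i`, and `Tᵀ X T = ∑ (R_i T)ᵀ (R_i T)` where each `R_i T` is again such a
row by [V1]. The Gram matrix `RᵀR` of such a row spans an extreme ray of `S^n_+ ∩ V`: a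
unipotent change of basis turns `R` into `c·I^{i}`, so any summand of `RᵀR` in `S^n_+ ∩ V`
becomes supported on the block `(i,i)`, where it is scalar, hence a multiple of `RᵀR`.
-/

section Cone

variable {E : Type*} [AddCommGroup E] [Module ℝ E]

lemma self_mem_ray (A : E) : A ∈ ray A :=
  ⟨1, zero_le_one, (one_smul ℝ A).symm⟩

lemma smul_mem_ray {A x : E} (hx : x ∈ ray A) {c : ℝ} (hc : 0 ≤ c) : c • x ∈ ray A := by
  obtain ⟨κ, hκ, rfl⟩ := hx
  exact ⟨c * κ, mul_nonneg hc hκ, smul_smul c κ A⟩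

lemma convex_ray (A : E) : Convex ℝ (ray A) := by
  rintro _ ⟨a, ha, rfl⟩ _ ⟨b, hb, rfl⟩ s t hs ht -
  exact ⟨s * a + t * b, by positivity, by rw [smul_smul, smul_smul, add_smul]⟩

lemma span_ray (A : E) : Submodule.span ℝ (ray A) = ℝ ∙ A := by
  refine le_antisymm (Submodule.span_le.mpr ?_) (Submodule.span_mono ?_)
  · rintro _ ⟨κ, -, rfl⟩
    exact Submodule.smul_mem _ κ (Submodule.mem_span_singleton_self A)
  · exact Set.singleton_subset_iff.mpr (self_mem_ray A)

theorem isExtremeRayOf_ray {C : Set E} {A : E} (hA : A ≠ 0) (hAC : A ∈ C)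
    (hC : ∀ c : ℝ, 0 ≤ c → ∀ x ∈ C, c • x ∈ C)
    (hface : ∀ x ∈ C, ∀ y ∈ C, x + y ∈ ray A → x ∈ ray A) :
    IsExtremeRayOf (ray A) C := by
  refine ⟨⟨⟨A, self_mem_ray A⟩, ?_, convex_ray A, ?_⟩, ?_⟩
  · rintro _ ⟨κ, hκ, rfl⟩
    exact hC κ hκ A hAC
  · rintro x hx y hy ⟨t, ht0, ht1, hxy⟩
    have ht1' : 0 < 1 - t := sub_pos.mpr ht1
    have htx := hface _ (hC t ht0.le x hx) _ (hC _ ht1'.le y hy) hxy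
    have hty := hface _ (hC _ ht1'.le y hy) _ (hC t ht0.le x hx) (add_comm (t • x) _ ▸ hxy)
    constructor
    · simpa [smul_smul, ht0.ne'] using smul_mem_ray htx (inv_nonneg.mpr ht0.le)
    · simpa [smul_smul, ht1'.ne'] using smul_mem_ray hty (inv_nonneg.mpr ht1'.le)
  · rw [span_ray, finrank_span_singleton hA]

lemma sumExtreme_sum {C : Set E} {ι : Type*} (P : Finset ι) (f : ι → E)
    (hf : ∀ i ∈ P, f i = 0 ∨ ∃ R, IsExtremeRayOf R C ∧ f i ∈ R) :
    SumExtreme C P.card (∑ i ∈ P, f i) := by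
  classical
  set Q := P.filter (f · ≠ 0)
  refine ⟨Q.card, fun k => f (Q.equivFin.symm k), Finset.card_filter_le _ _, fun k => ?_, ?_⟩
  · have hk := Finset.mem_filter.mp (Q.equivFin.symm k).2
    exact (hf _ hk.1).resolve_left hk.2
  · rw [← Finset.sum_filter_ne_zero, ← Finset.sum_coe_sort Q, ← Equiv.sum_comp Q.equivFin.symm]

end Cone

namespace Matrix.PosSemidef

variable {ι : Type*} [Fintype ι] {A : Matrix ι ι ℝ}

lemma apply_eq_zero_of_diag_eq_zero [DecidableEq ι] (hA : A.PosSemidef) {p : ι}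
    (hp : A p p = 0) (q : ι) : A q p = 0 := by
  have hcol := (hA.dotProduct_mulVec_zero_iff (Pi.single p 1)).mp (by simpa using hp)
  simpa using congrFun hcol q

lemma transpose_mul_mul_same (hA : A.PosSemidef) (B : Matrix ι ι ℝ) :
    (Bᵀ * A * B).PosSemidef := by
  simpa [conjTranspose_eq_transpose_of_trivial] using hA.conjTranspose_mul_mul_same B

end Matrix.PosSemidef

lemma Matrix.posSemidef_transpose_mul_self {ι κ : Type*} [Fintype ι] [Fintype κ]
    (A : Matrix ι κ ℝ) : (Aᵀ * A).PosSemidef := by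
  simpa [conjTranspose_eq_transpose_of_trivial] using posSemidef_conjTranspose_mul_self A

variable {n : Fin r → ℕ}

section Blocks

lemma blk_mul (X Y : Matrix (BIx n) (BIx n) ℝ) (i j : Fin r) :
    blk (X * Y) i j = ∑ k, blk X i k * blk Y k j := by
  ext a b
  simp only [blk, of_apply, mul_apply, Matrix.sum_apply, ← Finset.univ_sigma_univ,
    Finset.sum_sigma]

lemma blk_smul (c : ℝ) (X : Matrix (BIx n) (BIx n) ℝ) (i j : Fin r) :
    blk (c • X) i j = c • blk X i j := rfl

lemma blk_transpose (X : Matrix (BIx n) (BIx n) ℝ) (i j : Fin r) :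
    blk Xᵀ i j = (blk X j i)ᵀ := rfl

lemma IB_eq_diagonal (B : Finset (Fin r)) :
    IB n B = diagonal fun p => if p.1 ∈ B then 1 else 0 := by
  ext p q
  by_cases h : p = q
  · subst h
    simp [IB]
  · simp [IB, h]

lemma IB_mul_apply (B : Finset (Fin r)) (X : Matrix (BIx n) (BIx n) ℝ) (p q : BIx n) :
    (IB n B * X) p q = if p.1 ∈ B then X p q else 0 := by
  simp [IB_eq_diagonal]

lemma mul_IB_apply (B : Finset (Fin r)) (X : Matrix (BIx n) (BIx n) ℝ) (p q : BIx n) :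
    (X * IB n B) p q = if q.1 ∈ B then X p q else 0 := by
  simp [IB_eq_diagonal]

lemma IB_transpose (B : Finset (Fin r)) : (IB n B)ᵀ = IB n B := by
  rw [IB_eq_diagonal, diagonal_transpose]

lemma IB_mul_self (B : Finset (Fin r)) : IB n B * IB n B = IB n B := by
  rw [IB_eq_diagonal, diagonal_mul_diagonal]
  congr 1
  ext p
  split_ifs <;> simp

lemma blk_IB_mul (i : Fin r) (X : Matrix (BIx n) (BIx n) ℝ) (k j : Fin r) :
    blk (IB n {i} * X) k j = if k = i then blk X k j else 0 := by
  ext a b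
  split_ifs with h <;> simp [blk, IB_mul_apply, h]

lemma IB_mul_mul_IB {i : Fin r} {X : Matrix (BIx n) (BIx n) ℝ} {c : ℝ}
    (hX : blk X i i = c • 1) : IB n {i} * X * IB n {i} = c • IB n {i} := by
  ext ⟨k, a⟩ ⟨l, b⟩
  rw [mul_IB_apply, IB_mul_apply, Matrix.smul_apply]
  by_cases hk : k = i <;> by_cases hl : l = i
  · subst hk hl
    simpa [IB, blk, one_apply] using congrFun (congrFun hX a) b
  · simp [IB, hk, hl, Ne.symm hl]
  all_goals simp [IB, hk]

lemma mul_IB_eq_self {B : Finset (Fin r)} {X : Matrix (BIx n) (BIx n) ℝ} (hX : X.IsSymm)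
    (hB : IB n B * X = X) : X * IB n B = X := by
  rw [← hX.eq, ← IB_transpose, ← transpose_mul, hB]

lemma IB_mul_eq_self {B : Finset (Fin r)} {X : Matrix (BIx n) (BIx n) ℝ} (hX : X.PosSemidef)
    (hdiag : ∀ p : BIx n, p.1 ∉ B → X p p = 0) : IB n B * X = X := by
  ext p q
  rw [IB_mul_apply]
  split_ifs with hp
  · rfl
  · rw [← (isHermitian_iff_isSymm.mp hX.isHermitian).apply]
    exact (hX.apply_eq_zero_of_diag_eq_zero (hdiag p hp) q).symm

lemma IB_mul_mul_IB_eq_self_of_add {B : Finset (Fin r)} {X Z : Matrix (BIx n) (BIx n) ℝ}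
    (hX : X.PosSemidef) (hZ : Z.PosSemidef) {a : ℝ} (hXZ : X + Z = a • IB n B) :
    IB n B * X * IB n B = X := by
  have hdiag : ∀ p : BIx n, p.1 ∉ B → X p p = 0 := fun p hp => by
    have hp0 : X p p + Z p p = 0 := by
      simpa [IB_eq_diagonal, hp] using congrFun (congrFun hXZ p) p
    linarith [hX.diag_nonneg (i := p), hZ.diag_nonneg (i := p)]
  rw [IB_mul_eq_self hX hdiag, mul_IB_eq_self (isHermitian_iff_isSymm.mp hX.isHermitian)
    (IB_mul_eq_self hX hdiag)]

lemma exists_mul_eq_smul_IB {i : Fin r} {R : Matrix (BIx n) (BIx n) ℝ} {c : ℝ} (hc : c ≠ 0)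
    (hR : IB n {i} * R = R) (hRii : blk R i i = c • 1) :
    ∃ U W : Matrix (BIx n) (BIx n) ℝ,
      U * W = 1 ∧ R * U = c • IB n {i} ∧ U * IB n {i} = IB n {i} := by
  set E := IB n {i}
  set N := R - c • E
  have hRE : R * E = c • E := by rw [← IB_mul_mul_IB hRii, hR]
  have hEN : E * N = N := by rw [mul_sub, hR, mul_smul_comm, IB_mul_self]
  have hNE : N * E = 0 := by rw [sub_mul, hRE, smul_mul_assoc, IB_mul_self, sub_self]
  have hNN : N * N = 0 :=
    calc N * N = N * (E * N) := by rw [hEN]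
      _ = 0 := by rw [← Matrix.mul_assoc, hNE, Matrix.zero_mul]
  have hRN : R * N = c • N := by
    rw [← sub_add_cancel R (c • E), add_mul, hNN, smul_mul_assoc, hEN, zero_add]
  refine ⟨1 - c⁻¹ • N, 1 + c⁻¹ • N, ?_, ?_, ?_⟩
  · simp [sub_mul, mul_add, hNN]
  · rw [mul_sub, mul_one, mul_smul_comm, hRN, smul_smul, inv_mul_cancel₀ hc, one_smul]
    exact sub_sub_cancel R (c • E)
  · rw [sub_mul, one_mul, smul_mul_assoc, hNE, smul_zero, sub_zero]

lemma transpose_mul_mul_schur {Y E : Matrix (BIx n) (BIx n) ℝ} {c : ℝ} (hc : c ≠ 0)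
    (hY : Yᵀ = Y) (hE : Eᵀ = E) (hEYE : E * Y * E = c • E) :
    (1 - c⁻¹ • (E * Y))ᵀ * Y * (1 - c⁻¹ • (E * Y)) = Y - c⁻¹ • (Y * E * Y) := by
  have h : Y * E * Y * E * Y = c • (Y * E * Y) := by
    rw [Matrix.mul_assoc (Y * E), Matrix.mul_assoc Y E, ← Matrix.mul_assoc E, hEYE,
      Matrix.mul_smul, Matrix.smul_mul, Matrix.mul_assoc]
  rw [transpose_sub, transpose_one, transpose_smul, transpose_mul, hY, hE]
  simp only [sub_mul, mul_sub, Matrix.one_mul, Matrix.mul_one, Matrix.smul_mul, Matrix.mul_smul,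
    ← Matrix.mul_assoc, h, smul_smul]
  rw [inv_mul_cancel₀ hc, mul_one, sub_self, sub_zero]

end Blocks

variable {Vb : ∀ i j : Fin r, Submodule ℝ (Matrix (Fin (n i)) (Fin (n j)) ℝ)}

section Subspaces

lemma sub_mem_Vset {X Y : Matrix (BIx n) (BIx n) ℝ} (hX : X ∈ Vset n Vb) (hY : Y ∈ Vset n Vb) :
    X - Y ∈ Vset n Vb :=
  ⟨hX.1.sub hY.1, fun i j hij => Submodule.sub_mem _ (hX.2 i j hij) (hY.2 i j hij)⟩

lemma smul_mem_KclSet {X : Matrix (BIx n) (BIx n) ℝ} (hX : X ∈ KclSet n Vb) {c : ℝ}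
    (hc : 0 ≤ c) : c • X ∈ KclSet n Vb :=
  ⟨hX.1.smul hc, hX.2.1.smul c, fun i j hij => Submodule.smul_mem _ c (hX.2.2 i j hij)⟩

lemma mem_VBset_iff {B : Finset (Fin r)} {X : Matrix (BIx n) (BIx n) ℝ} :
    X ∈ VBset n Vb B ↔ X ∈ Vset n Vb ∧ IB n B * X = X := by
  refine ⟨fun ⟨hV, hB⟩ => ⟨hV, ?_⟩, fun ⟨hV, hB⟩ => ⟨hV, fun i j _ hij => ?_⟩⟩
  · ext ⟨i, a⟩ ⟨j, b⟩
    rw [IB_mul_apply]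
    split_ifs with hi
    · rfl
    rcases le_total i j with hij | hji
    · exact (congrFun (congrFun (hB i j hij (Or.inl hi)) a) b).symm
    · rw [← hV.1.apply]
      exact (congrFun (congrFun (hB j i hji (Or.inr hi)) b) a).symm
  · ext a b
    rcases hij with hi | hj
    · rw [← hB]
      simp [blk, IB_mul_apply, hi]
    · rw [← mul_IB_eq_self hV.1 hB]
      simp [blk, mul_IB_apply, hj]

lemma blk_eq_zero_of_notMem {B : Finset (Fin r)} {X : Matrix (BIx n) (BIx n) ℝ}
    (hX : X ∈ VBset n Vb B) {j : Fin r} (hj : j ∉ B) (i : Fin r) : blk X i j = 0 := by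
  obtain ⟨hV, hB⟩ := mem_VBset_iff.mp hX
  ext x y
  rw [← mul_IB_eq_self hV.1 hB]
  simp [blk, mul_IB_apply, hj]

lemma mem_VBset_of_mem_VBset_insert {a : Fin r} {s : Finset (Fin r)}
    {Y : Matrix (BIx n) (BIx n) ℝ} (hY : Y.PosSemidef) (hYV : Y ∈ VBset n Vb (insert a s))
    (ha : ∀ b : Fin (n a), Y ⟨a, b⟩ ⟨a, b⟩ = 0) : Y ∈ VBset n Vb s := by
  obtain ⟨hV, hB⟩ := mem_VBset_iff.mp hYV
  refine mem_VBset_iff.mpr ⟨hV, IB_mul_eq_self hY fun ⟨k, b⟩ hk => ?_⟩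
  by_cases hka : k = a
  · subst hka
    exact ha b
  · rw [← hB, IB_mul_apply, if_neg (by simp [hka, hk])]

end Subspaces

section Triangular

lemma TTpp_subset_TT : TTpp n Vb ⊆ TT n Vb := fun _ ⟨hlow, hdiag, hup⟩ =>
  ⟨hlow, fun i => (hdiag i).imp fun _ => And.right, hup⟩

lemma one_mem_TTpp : (1 : Matrix (BIx n) (BIx n) ℝ) ∈ TTpp n Vb := by
  refine ⟨fun i j hij => ?_, fun i => ⟨1, one_pos, ?_⟩, fun i j hij => ?_⟩
  · ext a b
    simp [blk, one_apply, hij.ne']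
  · ext a b
    simp [blk, one_apply]
  · convert Submodule.zero_mem (Vb i j)
    ext a b
    simp [blk, one_apply, hij.ne]

lemma blk_mul_of_mem_TT {S T : Matrix (BIx n) (BIx n) ℝ} (hS : S ∈ TT n Vb) (hT : T ∈ TT n Vb)
    (i j : Fin r) : blk (S * T) i j = ∑ k ∈ Finset.Icc i j, blk S i k * blk T k j := by
  rw [blk_mul]
  refine (Finset.sum_subset (Finset.subset_univ _) fun k _ hk => ?_).symm
  rw [Finset.mem_Icc, not_and_or, not_le, not_le] at hk
  rcases hk with hki | hjk
  · rw [hS.1 i k hki, Matrix.zero_mul]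
  · rw [hT.1 k j hjk, Matrix.mul_zero]

lemma blk_mul_self_of_mem_TT {S T : Matrix (BIx n) (BIx n) ℝ} (hS : S ∈ TT n Vb)
    (hT : T ∈ TT n Vb) (i : Fin r) : blk (S * T) i i = blk S i i * blk T i i := by
  rw [blk_mul_of_mem_TT hS hT, Finset.Icc_self, Finset.sum_singleton]

end Triangular

/-- `R` is the `i`-th block row of a matrix of `𝕋₊₊`, all other rows being zero. -/
def IsPivotRow (n : Fin r → ℕ)
    (Vb : ∀ i j : Fin r, Submodule ℝ (Matrix (Fin (n i)) (Fin (n j)) ℝ))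
    (i : Fin r) (R : Matrix (BIx n) (BIx n) ℝ) : Prop :=
  R ∈ TT n Vb ∧ IB n {i} * R = R ∧ ∃ c : ℝ, 0 < c ∧ blk R i i = c • 1

lemma isPivotRow_smul_IB_mul {a : Fin r} {Y : Matrix (BIx n) (BIx n) ℝ} (hY : Y ∈ Vset n Vb)
    {c : ℝ} (hc : 0 < c) (hYaa : blk Y a a = c • 1) (hlow : ∀ j < a, blk Y a j = 0) :
    IsPivotRow n Vb a ((√c)⁻¹ • (IB n {a} * Y)) := by
  have hRaa : blk ((√c)⁻¹ • (IB n {a} * Y)) a a = √c • 1 := by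
    rw [blk_smul, blk_IB_mul, if_pos rfl, hYaa, smul_smul, inv_mul_eq_div, Real.div_sqrt]
  refine ⟨⟨fun k j hjk => ?_, fun k => ?_, fun k j hkj => ?_⟩,
    by rw [mul_smul_comm, ← Matrix.mul_assoc, IB_mul_self], √c, Real.sqrt_pos.mpr hc, hRaa⟩
  · rw [blk_smul, blk_IB_mul]
    split_ifs with hk
    · rw [hk] at hjk ⊢
      rw [hlow j hjk, smul_zero]
    · rw [smul_zero]
  · by_cases hk : k = a
    · exact ⟨√c, hk ▸ hRaa⟩
    · exact ⟨0, by rw [blk_smul, blk_IB_mul, if_neg hk, smul_zero, zero_smul]⟩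
  · rw [blk_smul, blk_IB_mul]
    split_ifs with hk
    · exact Submodule.smul_mem _ _ (hY.2 k j hkj.le)
    · rw [smul_zero]
      exact Submodule.zero_mem _

lemma blk_transpose_mul_self {i : Fin r} {R : Matrix (BIx n) (BIx n) ℝ} (hR : IB n {i} * R = R)
    (j k : Fin r) : blk (Rᵀ * R) j k = (blk R i j)ᵀ * blk R i k := by
  rw [blk_mul, Finset.sum_eq_single i (fun l _ hl => ?_) (by simp)]
  · rfl
  · rw [blk_transpose, ← hR, blk_IB_mul, if_neg hl, transpose_zero, Matrix.zero_mul]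

lemma IsPivotRow.transpose_mul_self_ne_zero (hn : ∀ i, 0 < n i) {i : Fin r}
    {R : Matrix (BIx n) (BIx n) ℝ} (hR : IsPivotRow n Vb i R) : Rᵀ * R ≠ 0 := by
  obtain ⟨-, -, c, hc, hRii⟩ := hR
  rw [← conjTranspose_eq_transpose_of_trivial, Ne, conjTranspose_mul_self_eq_zero]
  rintro rfl
  have h00 := congrFun (congrFun hRii ⟨0, hn i⟩) ⟨0, hn i⟩
  simp only [blk, of_apply, Matrix.zero_apply, Matrix.smul_apply, one_apply_eq, smul_eq_mul,
    mul_one] at h00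
  exact hc.ne h00

section Ishi

variable (hn : ∀ i, 0 < n i)
  (hdiag : ∀ i : Fin r, Vb i i = Submodule.span ℝ {(1 : Matrix (Fin (n i)) (Fin (n i)) ℝ)})
  (hV1 : ∀ i j k : Fin r, i ≤ j → j ≤ k → ∀ A ∈ Vb i j, ∀ B ∈ Vb j k, A * B ∈ Vb i k)
  (hV2 : ∀ i j k : Fin r, i ≤ j → j < k → ∀ A ∈ Vb i j, ∀ B ∈ Vb i k, Aᵀ * B ∈ Vb j k)
  (hV3 : ∀ i j : Fin r, i ≤ j → ∀ A ∈ Vb i j,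
    ∃ c : ℝ, Aᵀ * A = c • (1 : Matrix (Fin (n j)) (Fin (n j)) ℝ))

include hdiag in
lemma smul_one_mem_diag (i : Fin r) (c : ℝ) :
    c • (1 : Matrix (Fin (n i)) (Fin (n i)) ℝ) ∈ Vb i i := by
  rw [hdiag]
  exact Submodule.smul_mem _ c (Submodule.mem_span_singleton_self 1)

include hdiag in
lemma exists_eq_smul_one_of_mem_diag {i : Fin r} {A : Matrix (Fin (n i)) (Fin (n i)) ℝ}
    (hA : A ∈ Vb i i) : ∃ c : ℝ, A = c • 1 := by
  rw [hdiag] at hA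
  obtain ⟨c, rfl⟩ := Submodule.mem_span_singleton.mp hA
  exact ⟨c, rfl⟩

include hdiag in
lemma blk_mem_of_mem_TT {T : Matrix (BIx n) (BIx n) ℝ} (hT : T ∈ TT n Vb) {i j : Fin r}
    (hij : i ≤ j) : blk T i j ∈ Vb i j := by
  rcases hij.lt_or_eq with hij | rfl
  · exact hT.2.2 i j hij
  · obtain ⟨c, hc⟩ := hT.2.1 i
    rw [hc]
    exact smul_one_mem_diag hdiag i c

include hdiag hV1 in
lemma mul_mem_TT {S T : Matrix (BIx n) (BIx n) ℝ} (hS : S ∈ TT n Vb) (hT : T ∈ TT n Vb) :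
    S * T ∈ TT n Vb := by
  refine ⟨fun i j hji => ?_, fun i => ?_, fun i j _ => ?_⟩
  · rw [blk_mul_of_mem_TT hS hT, Finset.Icc_eq_empty_of_lt hji, Finset.sum_empty]
  · obtain ⟨s, hs⟩ := hS.2.1 i
    obtain ⟨t, ht⟩ := hT.2.1 i
    exact ⟨s * t, by rw [blk_mul_self_of_mem_TT hS hT, hs, ht, smul_mul_smul, one_mul]⟩
  · rw [blk_mul_of_mem_TT hS hT]
    refine Submodule.sum_mem _ fun k hk => ?_
    obtain ⟨hik, hkj⟩ := Finset.mem_Icc.mp hk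
    exact hV1 i k j hik hkj _ (blk_mem_of_mem_TT hdiag hS hik) _ (blk_mem_of_mem_TT hdiag hT hkj)

include hdiag hV1 in
lemma IsPivotRow.mul {i : Fin r} {R T : Matrix (BIx n) (BIx n) ℝ} (hR : IsPivotRow n Vb i R)
    (hT : T ∈ TTpp n Vb) : IsPivotRow n Vb i (R * T) := by
  obtain ⟨hRT, hER, c, hc, hRii⟩ := hR
  obtain ⟨t, ht, hTii⟩ := hT.2.1 i
  refine ⟨mul_mem_TT hdiag hV1 hRT (TTpp_subset_TT hT), by rw [← Matrix.mul_assoc, hER],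
    c * t, mul_pos hc ht, ?_⟩
  rw [blk_mul_self_of_mem_TT hRT (TTpp_subset_TT hT), hRii, hTii, smul_mul_smul, one_mul]

include hdiag hV2 hV3 in
lemma transpose_mul_self_mem_Vset {i : Fin r} {R : Matrix (BIx n) (BIx n) ℝ}
    (hRT : R ∈ TT n Vb) (hR : IB n {i} * R = R) : Rᵀ * R ∈ Vset n Vb := by
  refine ⟨isSymm_transpose_mul_self R, fun j k hjk => ?_⟩
  rw [blk_transpose_mul_self hR]
  rcases lt_or_ge j i with hji | hij
  · rw [hRT.1 i j hji, transpose_zero, Matrix.zero_mul]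
    exact Submodule.zero_mem _
  rcases hjk.lt_or_eq with hjk | rfl
  · exact hV2 i j k hij hjk _ (blk_mem_of_mem_TT hdiag hRT hij) _
      (blk_mem_of_mem_TT hdiag hRT (hij.trans hjk.le))
  · obtain ⟨c, hc⟩ := hV3 i j hij _ (blk_mem_of_mem_TT hdiag hRT hij)
    rw [hc]
    exact smul_one_mem_diag hdiag j c

include hn hdiag in
lemma mem_ray_of_add_mem_ray {i : Fin r} {R : Matrix (BIx n) (BIx n) ℝ} {c : ℝ} (hc : c ≠ 0)
    (hR : IB n {i} * R = R) (hRii : blk R i i = c • 1)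
    {X Z : Matrix (BIx n) (BIx n) ℝ} (hX : X ∈ KclSet n Vb) (hZ : Z.PosSemidef)
    (hXZ : X + Z ∈ ray (Rᵀ * R)) : X ∈ ray (Rᵀ * R) := by
  obtain ⟨κ, -, hXZ⟩ := hXZ
  obtain ⟨U, W, hUW, hRU, hUE⟩ := exists_mul_eq_smul_IB hc hR hRii
  obtain ⟨e, he⟩ := exists_eq_smul_one_of_mem_diag hdiag (hX.2.2 i i le_rfl)
  set E := IB n {i}
  have he0 : 0 ≤ e := by
    have hii := congrFun (congrFun he ⟨0, hn i⟩) ⟨0, hn i⟩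
    simp only [blk, of_apply, Matrix.smul_apply, one_apply_eq, smul_eq_mul, mul_one] at hii
    exact hii ▸ hX.1.diag_nonneg
  have hET : Eᵀ = E := IB_transpose _
  have hEE : E * E = E := IB_mul_self _
  have hconj : Uᵀ * X * U + Uᵀ * Z * U = (κ * c ^ 2) • E :=
    calc Uᵀ * X * U + Uᵀ * Z * U = κ • ((R * U)ᵀ * (R * U)) := by
          rw [← add_mul, ← mul_add, hXZ, transpose_mul]
          simp only [Matrix.mul_smul, Matrix.smul_mul, Matrix.mul_assoc]
      _ = (κ * c ^ 2) • E := by rw [hRU, transpose_smul, hET, smul_mul_smul, hEE, smul_smul, sq]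
  have hXU : Uᵀ * X * U = e • E := by
    rw [← IB_mul_mul_IB_eq_self_of_add (hX.1.transpose_mul_mul_same U)
      (hZ.transpose_mul_mul_same U) hconj]
    calc E * (Uᵀ * X * U) * E = (U * E)ᵀ * X * (U * E) := by
          simp only [transpose_mul, hET, Matrix.mul_assoc]
      _ = e • E := by rw [hUE, hET, IB_mul_mul_IB he]
  have hRW : R = c • (E * W) := by
    rw [← Matrix.mul_one R, ← hUW, ← Matrix.mul_assoc, hRU, smul_mul_assoc]
  refine ⟨e / c ^ 2, by positivity, ?_⟩
  calc X = Wᵀ * (Uᵀ * X * U) * W := by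
        simp only [← Matrix.mul_assoc, ← transpose_mul, hUW]
        simp only [Matrix.mul_assoc, hUW, transpose_one, Matrix.one_mul, Matrix.mul_one]
    _ = (e / c ^ 2) • (Rᵀ * R) := by
        rw [hXU, hRW, transpose_smul, transpose_mul, hET]
        simp only [Matrix.smul_mul, Matrix.mul_smul, smul_smul, Matrix.mul_assoc]
        rw [← Matrix.mul_assoc E E, hEE]
        congr 1
        field_simp

include hn hdiag hV2 hV3 in
theorem IsPivotRow.isExtremeRayOf {i : Fin r} {R : Matrix (BIx n) (BIx n) ℝ}
    (hR : IsPivotRow n Vb i R) : IsExtremeRayOf (ray (Rᵀ * R)) (KclSet n Vb) := by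
  refine isExtremeRayOf_ray (hR.transpose_mul_self_ne_zero hn)
    ⟨posSemidef_transpose_mul_self R, transpose_mul_self_mem_Vset hdiag hV2 hV3 hR.1 hR.2.1⟩
    (fun c hc X hX => smul_mem_KclSet hX hc) fun X hX Y hY hXY => ?_
  obtain ⟨-, hER, c, hc, hRii⟩ := hR
  exact mem_ray_of_add_mem_ray hn hdiag hc.ne' hER hRii hX hY.1 hXY

include hn hdiag hV2 hV3 in
lemma exists_pivotRow_sub_mem {a : Fin r} {s : Finset (Fin r)} (has : ∀ x ∈ s, a < x)
    {Y : Matrix (BIx n) (BIx n) ℝ} (hY : Y.PosSemidef) (hYV : Y ∈ VBset n Vb (insert a s)) :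
    ∃ R, (R = 0 ∨ IsPivotRow n Vb a R) ∧ (Y - Rᵀ * R).PosSemidef ∧ Y - Rᵀ * R ∈ VBset n Vb s := by
  obtain ⟨hV, hB⟩ := mem_VBset_iff.mp hYV
  obtain ⟨c, hc⟩ := exists_eq_smul_one_of_mem_diag hdiag (hV.2 a a le_rfl)
  have hYaa : ∀ b : Fin (n a), Y ⟨a, b⟩ ⟨a, b⟩ = c := fun b => by
    simpa [blk] using congrFun (congrFun hc b) b
  rcases (hYaa ⟨0, hn a⟩ ▸ hY.diag_nonneg).eq_or_lt with rfl | hcpos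
  · exact ⟨0, Or.inl rfl, by simpa using hY,
      by simpa using mem_VBset_of_mem_VBset_insert hY hYV hYaa⟩
  set E := IB n {a}
  set R := (√c)⁻¹ • (E * Y)
  have hlow : ∀ j < a, blk Y a j = 0 := fun j hja =>
    blk_eq_zero_of_notMem hYV (by simpa [hja.ne] using fun hj => (has j hj).not_gt hja) a
  have hR : IsPivotRow n Vb a R := isPivotRow_smul_IB_mul hV hcpos hc hlow
  have hRR : Rᵀ * R = c⁻¹ • (Y * E * Y) := by
    rw [transpose_smul, transpose_mul, hV.1.eq, IB_transpose, smul_mul_smul, ← mul_inv,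
      Real.mul_self_sqrt hcpos.le, Matrix.mul_assoc Y E, ← Matrix.mul_assoc E E, IB_mul_self,
      Matrix.mul_assoc]
  have hEYE : E * Y * E = c • E := IB_mul_mul_IB hc
  have hY' : (Y - Rᵀ * R).PosSemidef := by
    rw [hRR, ← transpose_mul_mul_schur hcpos.ne' hV.1.eq (IB_transpose _) hEYE]
    exact hY.transpose_mul_mul_same _
  have hY'V : Y - Rᵀ * R ∈ VBset n Vb (insert a s) := by
    refine mem_VBset_iff.mpr
      ⟨sub_mem_Vset hV (transpose_mul_self_mem_Vset hdiag hV2 hV3 hR.1 hR.2.1), ?_⟩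
    rw [mul_sub, hB, hRR, mul_smul_comm, ← Matrix.mul_assoc, ← Matrix.mul_assoc, hB]
  have hEY' : E * (Y - Rᵀ * R) = 0 := by
    rw [hRR, mul_sub, mul_smul_comm, ← Matrix.mul_assoc, ← Matrix.mul_assoc, hEYE,
      smul_mul_assoc, smul_smul, inv_mul_cancel₀ hcpos.ne', one_smul, sub_self]
  refine ⟨R, Or.inr hR, hY', mem_VBset_of_mem_VBset_insert hY' hY'V fun b => ?_⟩
  simpa [E, IB_mul_apply] using congrFun (congrFun hEY' ⟨a, b⟩) ⟨a, b⟩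

include hn hdiag hV2 hV3 in
theorem exists_sum_pivotRows (B : Finset (Fin r)) {Y : Matrix (BIx n) (BIx n) ℝ}
    (hY : Y.PosSemidef) (hYV : Y ∈ VBset n Vb B) :
    ∃ R : Fin r → Matrix (BIx n) (BIx n) ℝ,
      (∀ i ∈ B, R i = 0 ∨ IsPivotRow n Vb i (R i)) ∧ Y = ∑ i ∈ B, (R i)ᵀ * R i := by
  induction B using Finset.induction_on_min generalizing Y with
  | empty =>
    refine ⟨0, by simp, ?_⟩
    rw [Finset.sum_empty, ← (mem_VBset_iff.mp hYV).2]
    simp [IB_eq_diagonal]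
  | insert a s has ih =>
    obtain ⟨Ra, hRa, hY', hY'V⟩ := exists_pivotRow_sub_mem hn hdiag hV2 hV3 has hY hYV
    obtain ⟨R, hR, hsum⟩ := ih hY' hY'V
    have hne : ∀ i ∈ s, i ≠ a := fun i hi => (has i hi).ne'
    refine ⟨Function.update R a Ra, fun i hi => ?_, ?_⟩
    · rcases Finset.mem_insert.mp hi with rfl | hi
      · simpa using hRa
      · simpa [Function.update_of_ne (hne i hi)] using hR i hi
    · rw [Finset.sum_insert fun ha => hne a ha rfl, Function.update_self,
        Finset.sum_congr rfl fun i hi => by rw [Function.update_of_ne (hne i hi)], ← hsum,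
        add_sub_cancel]

include hn hdiag hV1 hV2 hV3 in
theorem sumExtreme_transpose_mul_mul {T : Matrix (BIx n) (BIx n) ℝ} (hT : T ∈ TTpp n Vb)
    (B : Finset (Fin r)) {X : Matrix (BIx n) (BIx n) ℝ} (hX : X.PosSemidef)
    (hXV : X ∈ VBset n Vb B) : SumExtreme (KclSet n Vb) B.card (Tᵀ * X * T) := by
  obtain ⟨R, hR, rfl⟩ := exists_sum_pivotRows hn hdiag hV2 hV3 B hX hXV
  have hconj : Tᵀ * (∑ i ∈ B, (R i)ᵀ * R i) * T = ∑ i ∈ B, (R i * T)ᵀ * (R i * T) := by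
    simp only [Matrix.mul_sum, Matrix.sum_mul, transpose_mul, Matrix.mul_assoc]
  rw [hconj]
  refine sumExtreme_sum B _ fun i hi => (hR i hi).imp (fun h => by simp [h]) fun h => ?_
  exact ⟨_, (h.mul hdiag hV1 hT).isExtremeRayOf hn hdiag hV2 hV3, self_mem_ray _⟩

end Ishi

theorem caratheodory_le_rank_general (r : ℕ)
    (n : Fin r → ℕ) (hn : ∀ i, 0 < n i)
    (Vb : ∀ i j : Fin r, Submodule ℝ (Matrix (Fin (n i)) (Fin (n j)) ℝ))
    (hdiag : ∀ i : Fin r, Vb i i = Submodule.span ℝ {(1 : Matrix (Fin (n i)) (Fin (n i)) ℝ)})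
    (hV1 : ∀ i j k : Fin r, i ≤ j → j ≤ k → ∀ A ∈ Vb i j, ∀ B ∈ Vb j k, A * B ∈ Vb i k)
    (hV2 : ∀ i j k : Fin r, i ≤ j → j < k → ∀ A ∈ Vb i j, ∀ B ∈ Vb i k, Aᵀ * B ∈ Vb j k)
    (hV3 : ∀ i j : Fin r, i ≤ j → ∀ A ∈ Vb i j,
      ∃ c : ℝ, Aᵀ * A = c • (1 : Matrix (Fin (n j)) (Fin (n j)) ℝ))
    :
    (∀ X ∈ KclSet n Vb, SumExtreme (KclSet n Vb) r X) ∧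
    (∀ T ∈ TTpp n Vb, ∀ B : Finset (Fin r), B.Nonempty →
      ∀ X ∈ intrinsicInterior ℝ (FTB n Vb T B), SumExtreme (KclSet n Vb) B.card X) ∧
    caraNumber (KclSet n Vb) ≤ r := by
  have hcone : ∀ X ∈ KclSet n Vb, SumExtreme (KclSet n Vb) r X := fun X hX => by
    have hXV : X ∈ VBset n Vb Finset.univ := mem_VBset_iff.mpr ⟨hX.2, by simp [IB_eq_diagonal]⟩
    simpa using sumExtreme_transpose_mul_mul hn hdiag hV1 hV2 hV3 one_mem_TTpp _ hX.1 hXV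
  refine ⟨hcone, fun T hT B _ X hX => ?_, Nat.sInf_le hcone⟩
  obtain ⟨X', hX', hX'V, rfl⟩ := intrinsicInterior_subset hX
  exact sumExtreme_transpose_mul_mul hn hdiag hV1 hV2 hV3 hT B hX' hX'V

/-- **The Carathéodory number of the closure of an Ishi spectrahedral cone is at most `r`.**
Every matrix in `S^n_+ ∩ V` is a sum of at most `r` matrices lying on extreme rays of
`S^n_+ ∩ V`; more precisely, every matrix in the relative interior of a face `F_{T,B}`
is a sum of at most `|B|` matrices lying on extreme rays of `S^n_+ ∩ V`.  In particular
the Carathéodory number of `S^n_+ ∩ V` is at most `r`. -/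
theorem caratheodory_le_rank (r : ℕ) (hr : 1 ≤ r)
    (n : Fin r → ℕ) (hn : ∀ i, 0 < n i)
    (Vb : ∀ i j : Fin r, Submodule ℝ (Matrix (Fin (n i)) (Fin (n j)) ℝ))
    (hdiag : ∀ i : Fin r, Vb i i = Submodule.span ℝ {(1 : Matrix (Fin (n i)) (Fin (n i)) ℝ)})
    (hV1 : ∀ i j k : Fin r, i ≤ j → j ≤ k → ∀ A ∈ Vb i j, ∀ B ∈ Vb j k, A * B ∈ Vb i k)
    (hV2 : ∀ i j k : Fin r, i ≤ j → j < k → ∀ A ∈ Vb i j, ∀ B ∈ Vb i k, Aᵀ * B ∈ Vb j k)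
    (hV3 : ∀ i j : Fin r, i ≤ j → ∀ A ∈ Vb i j,
      ∃ c : ℝ, Aᵀ * A = c • (1 : Matrix (Fin (n j)) (Fin (n j)) ℝ))
    :
    (∀ X ∈ KclSet n Vb, SumExtreme (KclSet n Vb) r X) ∧
    (∀ T ∈ TTpp n Vb, ∀ B : Finset (Fin r), B.Nonempty →
      ∀ X ∈ intrinsicInterior ℝ (FTB n Vb T B), SumExtreme (KclSet n Vb) B.card X) ∧
    caraNumber (KclSet n Vb) ≤ r :=
  caratheodory_le_rank_general r n hn Vb hdiag hV1 hV2 hV3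
end
end

section
/- For all indices 1 ≤ i ≤ j < k ≤ r, every B ∈ V_jk, and all X, Y ∈ V_ij, one has ⟨X·B | Y·B⟩_F = (1/n_j)·‖B‖_F²·⟨X|Y⟩_F. (Equivalently, the right-multiplication map X ↦ X·B from V_ij into V_ik satisfies R_B* ∘ R_B = (1/n_j)·‖B‖_F² times the identity on V_ij.) -/
noncomputable section
open scoped Classical
open Matrix

variable {r : ℕ}

/-!
Polarizing [V3] on `X`, `Y` and `X + Y` gives `XᵀY + YᵀX = c·I` for a scalar `c`. Hence
`2⟨XB|YB⟩ = tr(Bᵀ(XᵀY + YᵀX)B) = c‖B‖²`, and the case `B = I` reads `2⟨X|Y⟩ = c·n_j`;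
eliminating `c` gives the identity.
-/

section

variable {m p q : Type*} [Fintype m]

theorem exists_transpose_mul_add_eq_smul_one [DecidableEq p] {W : Submodule ℝ (Matrix m p ℝ)}
    (hW : ∀ A ∈ W, ∃ c : ℝ, Aᵀ * A = c • 1) {X Y : Matrix m p ℝ} (hX : X ∈ W) (hY : Y ∈ W) :
    ∃ c : ℝ, Xᵀ * Y + Yᵀ * X = c • 1 := by
  obtain ⟨a, ha⟩ := hW X hX
  obtain ⟨b, hb⟩ := hW Y hY
  obtain ⟨c, hc⟩ := hW (X + Y) (add_mem hX hY)
  refine ⟨c - a - b, ?_⟩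
  have hexpand : (X + Y)ᵀ * (X + Y) = Xᵀ * X + (Xᵀ * Y + Yᵀ * X) + Yᵀ * Y := by
    rw [transpose_add, Matrix.add_mul, Matrix.mul_add, Matrix.mul_add]
    abel
  rw [hexpand, ha, hb] at hc
  rw [sub_smul, sub_smul, ← hc]
  abel

variable [Fintype p] [Fintype q]

theorem trInner_comm (X Y : Matrix m p ℝ) : trInner X Y = trInner Y X := by
  rw [trInner, trInner, ← trace_transpose, transpose_mul, transpose_transpose]

variable [DecidableEq p]

theorem two_mul_trInner_mul_right {X Y : Matrix m p ℝ} {c : ℝ}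
    (h : Xᵀ * Y + Yᵀ * X = c • 1) (B : Matrix p q ℝ) :
    2 * trInner (X * B) (Y * B) = c * trInner B B :=
  calc 2 * trInner (X * B) (Y * B) = trInner (X * B) (Y * B) + trInner (Y * B) (X * B) := by
        rw [two_mul, trInner_comm (Y * B)]
    _ = trace (Bᵀ * (Xᵀ * Y + Yᵀ * X) * B) := by
        simp only [trInner, transpose_mul, Matrix.mul_add, Matrix.add_mul, Matrix.mul_assoc,
          trace_add]
    _ = c * trInner B B := by
        rw [h, Matrix.mul_smul, Matrix.mul_one, Matrix.smul_mul, trace_smul, smul_eq_mul,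
          trInner]

theorem two_mul_trInner {X Y : Matrix m p ℝ} {c : ℝ} (h : Xᵀ * Y + Yᵀ * X = c • 1) :
    2 * trInner X Y = c * Fintype.card p := by
  simpa [trInner, trace_one] using two_mul_trInner_mul_right h (1 : Matrix p p ℝ)

theorem trInner_mul_right_mul_right {W : Submodule ℝ (Matrix m p ℝ)}
    (hW : ∀ A ∈ W, ∃ c : ℝ, Aᵀ * A = c • 1) {X Y : Matrix m p ℝ} (hX : X ∈ W) (hY : Y ∈ W)
    (B : Matrix p q ℝ) :
    trInner (X * B) (Y * B) = (1 / Fintype.card p) * trInner B B * trInner X Y := by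
  obtain ⟨c, hc⟩ := exists_transpose_mul_add_eq_smul_one hW hX hY
  have hB := two_mul_trInner_mul_right hc B
  have hI := two_mul_trInner hc
  rcases (Fintype.card p).eq_zero_or_pos with hp | hp
  · have : IsEmpty p := Fintype.card_eq_zero_iff.mp hp
    simp [Subsingleton.elim B 0, trInner]
  · have hp' : (Fintype.card p : ℝ) ≠ 0 := by positivity
    field_simp
    linear_combination (Fintype.card p / 2 : ℝ) * hB - (trInner B B / 2) * hI

end

theorem right_multiplication_similarity_general (r : ℕ)
    (n : Fin r → ℕ)
    (Vb : ∀ i j : Fin r, Submodule ℝ (Matrix (Fin (n i)) (Fin (n j)) ℝ))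
    (hV3 : ∀ i j : Fin r, i ≤ j → ∀ A ∈ Vb i j,
      ∃ c : ℝ, Aᵀ * A = c • (1 : Matrix (Fin (n j)) (Fin (n j)) ℝ))
    (i j k : Fin r) (hij : i ≤ j)
    (B : Matrix (Fin (n j)) (Fin (n k)) ℝ)
    (X : Matrix (Fin (n i)) (Fin (n j)) ℝ) (hX : X ∈ Vb i j)
    (Y : Matrix (Fin (n i)) (Fin (n j)) ℝ) (hY : Y ∈ Vb i j) :
    trInner (X * B) (Y * B) = (1 / (n j : ℝ)) * trInner B B * trInner X Y := by
  simpa using trInner_mul_right_mul_right (hV3 i j hij) hX hY B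

/-- **The right-multiplication maps are similarities.**
For `1 ≤ i ≤ j < k ≤ r`, `B ∈ V_{jk}` and `X, Y ∈ V_{ij}`, one has
`⟨X·B | Y·B⟩_F = (1/n_j)·‖B‖_F²·⟨X|Y⟩_F`. -/
theorem right_multiplication_similarity (r : ℕ) (hr : 1 ≤ r)
    (n : Fin r → ℕ) (hn : ∀ i, 0 < n i)
    (Vb : ∀ i j : Fin r, Submodule ℝ (Matrix (Fin (n i)) (Fin (n j)) ℝ))
    (hdiag : ∀ i : Fin r, Vb i i = Submodule.span ℝ {(1 : Matrix (Fin (n i)) (Fin (n i)) ℝ)})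
    (hV1 : ∀ i j k : Fin r, i ≤ j → j ≤ k → ∀ A ∈ Vb i j, ∀ B ∈ Vb j k, A * B ∈ Vb i k)
    (hV2 : ∀ i j k : Fin r, i ≤ j → j < k → ∀ A ∈ Vb i j, ∀ B ∈ Vb i k, Aᵀ * B ∈ Vb j k)
    (hV3 : ∀ i j : Fin r, i ≤ j → ∀ A ∈ Vb i j,
      ∃ c : ℝ, Aᵀ * A = c • (1 : Matrix (Fin (n j)) (Fin (n j)) ℝ))
    (i j k : Fin r) (hij : i ≤ j) (hjk : j < k)
    (B : Matrix (Fin (n j)) (Fin (n k)) ℝ) (hB : B ∈ Vb j k)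
    (X : Matrix (Fin (n i)) (Fin (n j)) ℝ) (hX : X ∈ Vb i j)
    (Y : Matrix (Fin (n i)) (Fin (n j)) ℝ) (hY : Y ∈ Vb i j) :
    trInner (X * B) (Y * B) = (1 / (n j : ℝ)) * trInner B B * trInner X Y :=
  right_multiplication_similarity_general r n Vb hV3 i j k hij B X hX Y hY
end
end
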